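/- Let ℍ be the real quaternions with imaginary units i, j, k, let n ≥ 1, and let 𝔤 = sp(n+1) ⊕ ℝ, where sp(n+1) = {A ∈ ℍ^{(n+1)×(n+1)} : A + conj(A)ᵗ = 0} with the commutator bracket and the ℝ-summand is central, equipped with the invariant inner product ⟨(A,a),(B,b)⟩ = −Re(tr(A·B)) + a·b. Let 𝔥 = {(diag(C, a·i), a) : C ∈ sp(n), a ∈ ℝ}, let 𝔪 = 𝔥^⊥, pr_𝔪 the orthogonal projection onto 𝔪, and 𝔪₀ = {(diag(0_n, a·i), −a) : a ∈ ℝ} (which is the fixed-point set of ad(𝔥) on 𝔪). Then the set of Randers equigeodesic vectors contained in 𝔪 is exactly 𝔪₀ \ {0}. -/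

import Mathlib

open Matrix

attribute [local instance 100] LieRing.ofAssociativeRing

attribute [local instance 100] LieAlgebra.ofAssociativeAlgebra

/-- The quaternion imaginary unit `i`. -/
noncomputable def qi : Quaternion ℝ := ⟨0, 1, 0, 0⟩

/-- The ambient Lie algebra: quaternionic `(n+1)×(n+1)` matrices (with the commutator
bracket) times a central copy of `ℝ`.  The Lie algebra `𝔤 = sp(n+1) ⊕ ℝ` is the
subalgebra of pairs `(A, a)` with `A + conj(A)ᵗ = 0`. -/
abbrev SpU (n : ℕ) := Matrix (Fin (n + 1)) (Fin (n + 1)) (Quaternion ℝ) × ℝ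

/-- The invariant inner product `⟨(A,a),(B,b)⟩ = −Re(tr(A·B)) + a·b`. -/
noncomputable def ipSpU (n : ℕ) (x y : SpU n) : ℝ := -((x.1 * y.1).trace).re + x.2 * y.2

/-- An invariant inner product on the subspace `𝔪` of the Lie algebra `L`, encoded as a
bilinear form on `L` which is symmetric and positive definite on `𝔪`, and `ad 𝔥`-invariant
on `𝔪`. -/
def IsInvariantInnerOn {L : Type*} [LieRing L] [LieAlgebra ℝ L]
    (𝔥 𝔪 : Submodule ℝ L) (α : L →ₗ[ℝ] L →ₗ[ℝ] ℝ) : Prop :=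
  (∀ u ∈ 𝔪, ∀ v ∈ 𝔪, α u v = α v u) ∧
  (∀ u ∈ 𝔪, u ≠ 0 → 0 < α u u) ∧
  (∀ w ∈ 𝔥, ∀ u ∈ 𝔪, ∀ v ∈ 𝔪, α ⁅w, u⁆ v + α u ⁅w, v⁆ = 0)

/-- `X` is a Randers equigeodesic vector: the geodesic-vector criterion
`α(pr_𝔪 ⁅X,Z⁆, X) + √(α(X,X))·α(pr_𝔪 ⁅X,Z⁆, u) = 0` for every invariant inner product
`α` on `𝔪`, every `u ∈ 𝔪₀` with `α(u,u) < 1`, and every `Z ∈ 𝔪`. -/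
def IsRandersEquigeodesicVector {L : Type*} [LieRing L] [LieAlgebra ℝ L]
    (𝔥 𝔪 𝔪₀ : Submodule ℝ L) (pr : L →ₗ[ℝ] L) (X : L) : Prop :=
  ∀ α : L →ₗ[ℝ] L →ₗ[ℝ] ℝ, IsInvariantInnerOn 𝔥 𝔪 α →
    ∀ u ∈ 𝔪₀, α u u < 1 →
      ∀ Z ∈ 𝔪, α (pr ⁅X, Z⁆) X + Real.sqrt (α X X) * α (pr ⁅X, Z⁆) u = 0

/-!
The form `ipSpU` is itself an invariant inner product on `𝔪`, and the elements
`W = (diag(0, i), 1) ∈ 𝔥` and `u₀ = (diag(0, i), -1) ∈ 𝔪₀` differ by a central element.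
If `X ∈ 𝔪` is equigeodesic, testing the Randers condition with `α = ipSpU` and `u = 0`, then
with a small multiple of `u₀`, gives `⟨pr ⁅X, Z⁆, u₀⟩ = 0` for all `Z ∈ 𝔪`. For `Z = ⁅W, X⁆`
invariance turns this into `⟨Z, Z⟩ = 0`, so `X` commutes with `diag(0, i)`; orthogonality to
`𝔥` then forces `X ∈ 𝔪₀`. Conversely `X = (diag(0, t i), -t) ∈ 𝔪₀` acts on `𝔤` as
`w = (diag(0, t i), t) ∈ 𝔥`, which centralizes `𝔥` and `𝔪₀`; hence `⁅X, Z⁆ = ⁅w, Z⁆` lies in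
`𝔪` and, for every invariant `α`, is `α`-orthogonal to `X` and to `𝔪₀`.
-/

open Quaternion

section Quaternion

@[simp] lemma re_qi : qi.re = 0 := rfl
@[simp] lemma imI_qi : qi.imI = 1 := rfl
@[simp] lemma imJ_qi : qi.imJ = 0 := rfl
@[simp] lemma imK_qi : qi.imK = 0 := rfl

lemma star_qi : star qi = -qi := by
  ext <;> simp

lemma qi_ne_zero : qi ≠ 0 := fun h => by simpa using congrArg QuaternionAlgebra.imI h

lemma commute_qi_iff {d : ℍ[ℝ]} : Commute qi d ↔ d.imJ = 0 ∧ d.imK = 0 := by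
  constructor
  · intro h
    have hJ := congrArg QuaternionAlgebra.imJ h.eq
    have hK := congrArg QuaternionAlgebra.imK h.eq
    simp only [Quaternion.imJ_mul, Quaternion.imK_mul, re_qi, imI_qi, imJ_qi, imK_qi] at hJ hK
    constructor <;> linarith
  · rintro ⟨hJ, hK⟩
    ext <;> simp [Quaternion.re_mul, Quaternion.imI_mul, Quaternion.imJ_mul,
      Quaternion.imK_mul, hJ, hK]

lemma eq_imI_smul_qi {d : ℍ[ℝ]} (hre : d.re = 0) (hJ : d.imJ = 0) (hK : d.imK = 0) :
    d = d.imI • qi := by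
  ext <;> simp [hre, hJ, hK]

lemma Quaternion.re_mul_comm (x y : ℍ[ℝ]) : (x * y).re = (y * x).re := by
  simp only [Quaternion.re_mul]
  ring

lemma Quaternion.re_sum {R ι : Type*} [CommRing R] (s : Finset ι) (f : ι → ℍ[R]) :
    (∑ i ∈ s, f i).re = ∑ i ∈ s, (f i).re :=
  map_sum (QuaternionAlgebra.reₗ (-1 : R) 0 (-1)) f s

end Quaternion

lemma lie_add_star_lie_eq_zero {R : Type*} [Ring R] [StarRing R] {a b : R}
    (ha : a + star a = 0) (hb : b + star b = 0) : ⁅a, b⁆ + star ⁅a, b⁆ = 0 := by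
  rw [add_eq_zero_iff_eq_neg'] at ha hb
  rw [Ring.lie_def, star_sub, star_mul, star_mul, ha, hb]
  noncomm_ring

section Equigeodesic

variable {L : Type*} [LieRing L] [LieAlgebra ℝ L] {𝔥 𝔪 𝔪₀ : Submodule ℝ L} {pr : L →ₗ[ℝ] L}
  {X : L}

lemma IsRandersEquigeodesicVector.apply_pr_lie_eq_zero
    (hX : IsRandersEquigeodesicVector 𝔥 𝔪 𝔪₀ pr X) {α : L →ₗ[ℝ] L →ₗ[ℝ] ℝ}
    (hα : IsInvariantInnerOn 𝔥 𝔪 α) (hXm : X ∈ 𝔪) (hX0 : X ≠ 0) {u : L} (hu : u ∈ 𝔪₀)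
    {Z : L} (hZ : Z ∈ 𝔪) : α (pr ⁅X, Z⁆) u = 0 := by
  have hX_perp : α (pr ⁅X, Z⁆) X = 0 := by
    simpa using hX α hα 0 (zero_mem _) (by simp) Z hZ
  set t : ℝ := (|α u u| + 1)⁻¹ with ht
  have ht0 : 0 < t := by positivity
  have ht1 : t * |α u u| < 1 := by
    rw [ht, inv_mul_lt_one₀ (by positivity)]
    linarith
  have htu : α (t • u) (t • u) < 1 := by
    have : t ≤ 1 := inv_le_one_of_one_le₀ (by linarith [abs_nonneg (α u u)])
    simp only [map_smul, LinearMap.smul_apply, smul_eq_mul]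
    calc t * (t * α u u) ≤ t * (t * |α u u|) := by gcongr; exact le_abs_self _
      _ ≤ 1 * (t * |α u u|) := by gcongr
      _ < 1 := by linarith
  have h := hX α hα (t • u) (Submodule.smul_mem _ t hu) htu Z hZ
  have hXX : Real.sqrt (α X X) ≠ 0 := (Real.sqrt_pos.2 (hα.2.1 X hXm hX0)).ne'
  simpa [hX_perp, hXX, ht0.ne'] using h

lemma isRandersEquigeodesicVector_of_pr_lie_eq_lie (hX : X ∈ 𝔪₀) (h𝔪₀ : 𝔪₀ ≤ 𝔪) {w : L}
    (hw : w ∈ 𝔥) (hw𝔪₀ : ∀ u ∈ 𝔪₀, ⁅w, u⁆ = 0) (hpr : ∀ Z ∈ 𝔪, pr ⁅X, Z⁆ = ⁅w, Z⁆) :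
    IsRandersEquigeodesicVector 𝔥 𝔪 𝔪₀ pr X := by
  intro α hα u hu _ Z hZ
  have hperp : ∀ v ∈ 𝔪₀, α ⁅w, Z⁆ v = 0 := fun v hv => by
    simpa [hw𝔪₀ v hv] using hα.2.2 w hw Z hZ v (h𝔪₀ hv)
  rw [hpr Z hZ, hperp X hX, hperp u hu, mul_zero, add_zero]

end Equigeodesic

namespace Matrix

variable {ι : Type*}

lemma apply_eq_neg_star_of_add_conjTranspose_eq_zero {A : Matrix ι ι ℍ[ℝ]} (hA : A + Aᴴ = 0)
    (p q : ι) : A q p = -star (A p q) := by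
  have h := congrFun₂ hA q p
  simp only [add_apply, conjTranspose_apply, zero_apply] at h
  exact eq_neg_of_add_eq_zero_left h

variable [Fintype ι]

lemma re_trace_mul (A B : Matrix ι ι ℍ[ℝ]) :
    (A * B).trace.re = ∑ p, ∑ q, (A p q * B q p).re := by
  simp only [trace, diag, mul_apply, Quaternion.re_sum]

lemma re_trace_mul_comm (A B : Matrix ι ι ℍ[ℝ]) : (A * B).trace.re = (B * A).trace.re := by
  rw [re_trace_mul, re_trace_mul, Finset.sum_comm]
  simp only [Quaternion.re_mul_comm]

lemma neg_re_trace_mul_self {A : Matrix ι ι ℍ[ℝ]} (hA : A + Aᴴ = 0) :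
    -(A * A).trace.re = ∑ p, ∑ q, normSq (A p q) := by
  have h (p q : ι) : (A p q * A q p).re = -normSq (A p q) := by
    rw [apply_eq_neg_star_of_add_conjTranspose_eq_zero hA p q, mul_neg, re_neg, normSq_def]
  simp only [re_trace_mul, h, Finset.sum_neg_distrib, neg_neg]

variable [DecidableEq ι]

lemma commute_single_iff {R : Type*} [Ring R] [NoZeroDivisors R] {l : ι} {a : R} (ha : a ≠ 0)
    {A : Matrix ι ι R} :
    Commute (single l l a) A ↔ (∀ p, p ≠ l → A p l = 0 ∧ A l p = 0) ∧ Commute a (A l l) := by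
  constructor
  · intro h
    refine ⟨fun p hp => ⟨?_, ?_⟩, commute_iff_eq _ _ |>.2 (by simpa using congrFun₂ h.eq l l)⟩
    · have := congrFun₂ h.eq p l
      simp only [single_mul_apply_of_ne _ _ _ _ _ hp, mul_single_apply_same] at this
      exact (mul_eq_zero.1 this.symm).resolve_right ha
    · have := congrFun₂ h.eq l p
      simp only [single_mul_apply_same, mul_single_apply_of_ne _ _ _ _ _ hp] at this
      exact (mul_eq_zero.1 this).resolve_left ha
  · rintro ⟨h, hl⟩
    ext i j
    by_cases hi : i = l <;> by_cases hj : j = l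
    · subst hi hj
      simpa using hl.eq
    · subst hi
      simp [mul_single_apply_of_ne _ _ _ _ _ hj, (h j hj).2]
    · subst hj
      simp [single_mul_apply_of_ne _ _ _ _ _ hi, (h i hi).1]
    · simp [single_mul_apply_of_ne _ _ _ _ _ hi, mul_single_apply_of_ne _ _ _ _ _ hj]

end Matrix

namespace SpU

variable {n : ℕ}

lemma lie_def (x y : SpU n) : ⁅x, y⁆ = (⁅x.1, y.1⁆, 0) :=
  Prod.ext rfl (sub_eq_zero.2 (mul_comm _ _))

lemma lie_eq_zero_iff {x y : SpU n} : ⁅x, y⁆ = 0 ↔ Commute x.1 y.1 := by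
  rw [lie_def, commute_iff_lie_eq, Prod.ext_iff]
  simp

noncomputable def ipForm (n : ℕ) : LinearMap.BilinForm ℝ (SpU n) :=
  LinearMap.mk₂ ℝ (ipSpU n)
    (fun _ _ _ => by
      simp only [ipSpU, Prod.fst_add, Prod.snd_add, add_mul, trace_add, re_add]; ring)
    (fun _ _ _ => by simp only [ipSpU, Prod.smul_fst, Prod.smul_snd, smul_mul, trace_smul,
      Quaternion.re_smul, smul_eq_mul]; ring)
    (fun _ _ _ => by
      simp only [ipSpU, Prod.fst_add, Prod.snd_add, mul_add, trace_add, re_add]; ring)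
    (fun _ _ _ => by simp only [ipSpU, Prod.smul_fst, Prod.smul_snd, Matrix.mul_smul, trace_smul,
      Quaternion.re_smul, smul_eq_mul]; ring)

@[simp] lemma ipForm_apply (x y : SpU n) : ipForm n x y = ipSpU n x y := rfl

lemma ipSpU_comm (x y : SpU n) : ipSpU n x y = ipSpU n y x := by
  rw [ipSpU, ipSpU, re_trace_mul_comm, mul_comm]

lemma ipSpU_lie_left (z x y : SpU n) : ipSpU n ⁅z, x⁆ y = -ipSpU n x ⁅z, y⁆ := by
  have h := re_trace_mul_comm z.1 (x.1 * y.1)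
  rw [lie_def, lie_def]
  simp only [ipSpU, Ring.lie_def, sub_mul, mul_sub, trace_sub, re_sub, mul_assoc, mul_zero,
    zero_mul] at h ⊢
  linarith

lemma ipSpU_self (x : SpU n) (hx : x.1 + x.1ᴴ = 0) :
    ipSpU n x x = ∑ p, ∑ q, normSq (x.1 p q) + x.2 ^ 2 := by
  rw [ipSpU, neg_re_trace_mul_self hx, sq]

lemma ipSpU_self_pos {x : SpU n} (hx : x.1 + x.1ᴴ = 0) (h0 : x ≠ 0) : 0 < ipSpU n x x := by
  rw [ipSpU_self x hx]
  obtain ⟨A, a⟩ := x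
  by_cases hA : A = 0
  · have ha : a ≠ 0 := by rintro rfl; exact h0 (by rw [hA]; rfl)
    simp only [hA, Matrix.zero_apply, map_zero, Finset.sum_const_zero, zero_add]
    positivity
  · obtain ⟨p, q, hpq⟩ : ∃ p q, A p q ≠ 0 := by
      by_contra! h
      exact hA (Matrix.ext h)
    have hsum : 0 < ∑ p, ∑ q, normSq (A p q) :=
      Finset.sum_pos' (fun _ _ => Finset.sum_nonneg fun _ _ => normSq_nonneg)
        ⟨p, Finset.mem_univ _, Finset.sum_pos' (fun _ _ => normSq_nonneg)
          ⟨q, Finset.mem_univ _, normSq_nonneg.lt_of_ne' (normSq_ne_zero.2 hpq)⟩⟩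
    positivity

lemma isInvariantInnerOn_ipForm {𝔥 𝔪 : Submodule ℝ (SpU n)}
    (h𝔪 : ∀ x ∈ 𝔪, x.1 + x.1ᴴ = 0) : IsInvariantInnerOn 𝔥 𝔪 (ipForm n) :=
  ⟨fun u _ v _ => ipSpU_comm u v, fun u hu h0 => ipSpU_self_pos (h𝔪 u hu) h0,
    fun w _ u _ v _ => by rw [ipForm_apply, ipForm_apply, ipSpU_lie_left, neg_add_cancel]⟩

-- `corner n t s = (diag(0_n, t·i), s)`: `𝔥` contains `corner n t t`, and `𝔪₀` consists of the
-- `corner n t (-t)`.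
noncomputable def corner (n : ℕ) (t s : ℝ) : SpU n :=
  (single (Fin.last n) (Fin.last n) (t • qi), s)

lemma corner_fst (t s : ℝ) : (corner n t s).1 = single (Fin.last n) (Fin.last n) (t • qi) := rfl

lemma corner_snd (t s : ℝ) : (corner n t s).2 = s := rfl

def IsIn𝔥 (x : SpU n) : Prop :=
  x.1 + x.1ᴴ = 0 ∧
    (∀ p : Fin (n + 1), p ≠ Fin.last n → x.1 p (Fin.last n) = 0 ∧ x.1 (Fin.last n) p = 0) ∧
    x.1 (Fin.last n) (Fin.last n) = x.2 • qi

def IsIn𝔪₀ (x : SpU n) : Prop :=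
  (∀ p q : Fin (n + 1), ¬(p = Fin.last n ∧ q = Fin.last n) → x.1 p q = 0) ∧
    x.1 (Fin.last n) (Fin.last n) = (-x.2) • qi

lemma corner_fst_add_conjTranspose (t s : ℝ) : (corner n t s).1 + (corner n t s).1ᴴ = 0 := by
  rw [corner_fst, conjTranspose_single, ← single_add, Quaternion.star_smul, star_qi, smul_neg,
    add_neg_cancel, single_zero]

lemma isIn𝔥_corner (t : ℝ) : IsIn𝔥 (corner n t t) :=
  ⟨corner_fst_add_conjTranspose t t,
    fun _ hp =>
      ⟨single_apply_of_row_ne (Ne.symm hp) _ _ _, single_apply_of_col_ne _ _ (Ne.symm hp) _⟩,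
    single_apply_same ..⟩

lemma isIn𝔪₀_iff {x : SpU n} : IsIn𝔪₀ x ↔ ∃ t, x = corner n t (-t) := by
  constructor
  · rintro ⟨hoff, hlast⟩
    refine ⟨-x.2, Prod.ext (Matrix.ext fun p q => ?_) (neg_neg _).symm⟩
    rw [corner_fst]
    by_cases hpq : p = Fin.last n ∧ q = Fin.last n
    · obtain ⟨rfl, rfl⟩ := hpq
      rw [hlast, single_apply_same]
    · rw [hoff p q hpq,
        single_apply_of_ne _ _ _ _ _ fun h => hpq ⟨h.1.symm, h.2.symm⟩]
  · rintro ⟨t, rfl⟩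
    refine ⟨fun p q hpq => ?_, ?_⟩
    · exact single_apply_of_ne _ _ _ _ _ fun h => hpq ⟨h.1.symm, h.2.symm⟩
    · rw [corner_fst, corner_snd, single_apply_same, neg_neg]

lemma ipSpU_corner (x : SpU n) (t s : ℝ) :
    ipSpU n x (corner n t s) = t * (x.1 (Fin.last n) (Fin.last n)).imI + x.2 * s := by
  simp [ipSpU, corner, trace_mul_single, Quaternion.re_mul]

lemma corner_lie_eq (t s s' : ℝ) (x : SpU n) : ⁅corner n t s, x⁆ = ⁅corner n t s', x⁆ := by
  rw [lie_def, lie_def]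
  rfl

lemma corner_lie_corner (t s t' s' : ℝ) : ⁅corner n t s, corner n t' s'⁆ = 0 := by
  rw [lie_eq_zero_iff, corner_fst, corner_fst, ← smul_single, ← smul_single]
  exact ((Commute.refl _).smul_left t).smul_right t'

lemma corner_lie_eq_zero_of_isIn𝔥 {y : SpU n} (hy : IsIn𝔥 y) (t s : ℝ) :
    ⁅corner n t s, y⁆ = 0 := by
  obtain ⟨-, hoff, hlast⟩ := hy
  rw [lie_eq_zero_iff, corner_fst, ← smul_single]
  refine ((commute_single_iff qi_ne_zero).2 ⟨hoff, ?_⟩).smul_left t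
  rw [hlast]
  exact (Commute.refl qi).smul_right _

lemma apply_eq_zero_of_forall_isIn𝔥 {X : SpU n} (hX : X.1 + X.1ᴴ = 0)
    (hperp : ∀ w, IsIn𝔥 w → ipSpU n X w = 0) {p q : Fin (n + 1)} (hp : p ≠ Fin.last n)
    (hq : q ≠ Fin.last n) : X.1 p q = 0 := by
  set c := X.1 p q with hc
  have hw : IsIn𝔥 ((single q p (star c) - single p q c, 0) : SpU n) := by
    refine ⟨?_, fun r _ => ⟨?_, ?_⟩, ?_⟩
    · rw [conjTranspose_sub, conjTranspose_single, conjTranspose_single, star_star,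
        sub_add_sub_cancel, sub_self]
    · simp [hp, hq]
    · simp [hp, hq]
    · simp [hp, hq]
  have h := hperp _ hw
  simp only [ipSpU, mul_sub, trace_sub, trace_mul_single, op_smul_eq_mul, ← hc,
    apply_eq_neg_star_of_add_conjTranspose_eq_zero hX p q, neg_mul, sub_neg_eq_add, re_add,
    self_mul_star, star_mul_self, re_coe, mul_zero, add_zero] at h
  exact normSq_eq_zero.1 (by linarith)

lemma isIn𝔪₀_of_corner_lie_eq_zero {X : SpU n} (hX : X.1 + X.1ᴴ = 0)
    (hperp : ∀ w, IsIn𝔥 w → ipSpU n X w = 0) (h : ⁅corner n 1 1, X⁆ = 0) : IsIn𝔪₀ X := by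
  rw [lie_eq_zero_iff, corner_fst, one_smul, commute_single_iff qi_ne_zero] at h
  obtain ⟨hoff, hcomm⟩ := h
  set d := X.1 (Fin.last n) (Fin.last n) with hd
  have hre : d.re = 0 := by
    have := congrArg QuaternionAlgebra.re
      (apply_eq_neg_star_of_add_conjTranspose_eq_zero hX (Fin.last n) (Fin.last n))
    simp only [re_neg, re_star, ← hd] at this
    linarith
  obtain ⟨hJ, hK⟩ := commute_qi_iff.1 hcomm
  have hsnd : X.2 = -d.imI := by
    have := hperp _ (isIn𝔥_corner 1)
    rw [ipSpU_corner] at this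
    linarith
  refine ⟨fun p q hpq => ?_, ?_⟩
  · by_cases hp : p = Fin.last n
    · subst hp
      exact (hoff q fun hq => hpq ⟨rfl, hq⟩).2
    · by_cases hq : q = Fin.last n
      · subst hq
        exact (hoff p hp).1
      · exact apply_eq_zero_of_forall_isIn𝔥 hX hperp hp hq
  · rw [hsnd, neg_neg]
    exact eq_imI_smul_qi hre hJ hK

section Submodules

variable {𝔥 𝔪 : Submodule ℝ (SpU n)}

lemma corner_mem (h𝔥 : ∀ x, x ∈ 𝔥 ↔ IsIn𝔥 x)
    (h𝔪 : ∀ x : SpU n, x ∈ 𝔪 ↔ x.1 + x.1ᴴ = 0 ∧ ∀ w ∈ 𝔥, ipSpU n x w = 0) (t : ℝ) :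
    corner n t (-t) ∈ 𝔪 := by
  refine (h𝔪 _).2 ⟨corner_fst_add_conjTranspose t (-t), fun w hw => ?_⟩
  obtain ⟨-, -, hlast⟩ := (h𝔥 w).1 hw
  rw [ipSpU_comm, ipSpU_corner, hlast, imI_smul, imI_qi, smul_eq_mul]
  ring

lemma corner_lie_mem (h𝔥 : ∀ x, x ∈ 𝔥 ↔ IsIn𝔥 x)
    (h𝔪 : ∀ x : SpU n, x ∈ 𝔪 ↔ x.1 + x.1ᴴ = 0 ∧ ∀ w ∈ 𝔥, ipSpU n x w = 0) (t s : ℝ) {Z : SpU n}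
    (hZ : Z ∈ 𝔪) : ⁅corner n t s, Z⁆ ∈ 𝔪 := by
  refine (h𝔪 _).2 ⟨?_, fun w hw => ?_⟩
  · rw [lie_def]
    exact lie_add_star_lie_eq_zero (corner_fst_add_conjTranspose t s) ((h𝔪 Z).1 hZ).1
  · rw [ipSpU_lie_left, corner_lie_eq_zero_of_isIn𝔥 ((h𝔥 w).1 hw)]
    simp [ipSpU]

lemma pr_eq_self (h𝔪 : ∀ x : SpU n, x ∈ 𝔪 ↔ x.1 + x.1ᴴ = 0 ∧ ∀ w ∈ 𝔥, ipSpU n x w = 0)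
    {pr : SpU n →ₗ[ℝ] SpU n} (hpr : ∀ x : SpU n, x.1 + x.1ᴴ = 0 → pr x ∈ 𝔪 ∧ x - pr x ∈ 𝔥)
    {x : SpU n} (hx : x ∈ 𝔪) : pr x = x := by
  obtain ⟨hpr𝔪, hpr𝔥⟩ := hpr x ((h𝔪 x).1 hx).1
  obtain ⟨hskew, hperp⟩ := (h𝔪 _).1 (sub_mem hx hpr𝔪)
  by_contra hne
  exact (ipSpU_self_pos hskew (sub_ne_zero.2 (Ne.symm hne))).ne' (hperp _ hpr𝔥)

lemma corner_lie_eq_zero_of_forall_ipSpU_pr (h𝔥 : ∀ x, x ∈ 𝔥 ↔ IsIn𝔥 x)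
    (h𝔪 : ∀ x : SpU n, x ∈ 𝔪 ↔ x.1 + x.1ᴴ = 0 ∧ ∀ w ∈ 𝔥, ipSpU n x w = 0)
    {pr : SpU n →ₗ[ℝ] SpU n} (hpr : ∀ x : SpU n, x.1 + x.1ᴴ = 0 → pr x ∈ 𝔪 ∧ x - pr x ∈ 𝔥)
    {X : SpU n} (hX : X ∈ 𝔪) (h : ∀ Z ∈ 𝔪, ipSpU n (pr ⁅X, Z⁆) (corner n 1 (-1)) = 0) :
    ⁅corner n 1 1, X⁆ = 0 := by
  set Z := ⁅corner n 1 1, X⁆ with hZ_def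
  have hZ : Z ∈ 𝔪 := corner_lie_mem h𝔥 h𝔪 1 1 hX
  have hZ_skew := ((h𝔪 Z).1 hZ).1
  have hXZ : ⁅X, Z⁆.1 + (⁅X, Z⁆.1)ᴴ = 0 := by
    rw [lie_def]
    exact lie_add_star_lie_eq_zero ((h𝔪 X).1 hX).1 hZ_skew
  have h_pr : ipSpU n (pr ⁅X, Z⁆) (corner n 1 (-1)) = ipSpU n ⁅X, Z⁆ (corner n 1 (-1)) := by
    have := ((h𝔪 _).1 (corner_mem h𝔥 h𝔪 1)).2 _ (hpr _ hXZ).2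
    rw [ipSpU_comm, ← ipForm_apply, map_sub, LinearMap.sub_apply, sub_eq_zero] at this
    exact this.symm
  -- `corner n 1 (-1)` and `corner n 1 1` act alike, so invariance turns the left side into `⟨Z, Z⟩`
  have h_lie : ipSpU n ⁅X, Z⁆ (corner n 1 (-1)) = ipSpU n Z Z := by
    rw [ipSpU_lie_left, ← lie_skew, corner_lie_eq 1 (-1) 1, ← hZ_def, ← ipForm_apply, map_neg,
      neg_neg, ipForm_apply]
  by_contra hne
  exact (ipSpU_self_pos hZ_skew hne).ne' (by rw [← h_lie, ← h_pr, h Z hZ])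

end Submodules

end SpU

theorem randers_equigeodesic_vectors_of_sp_u_one_sphere_general
    (n : ℕ)
    (𝔥 : Submodule ℝ (SpU n))
    (h𝔥 : ∀ x : SpU n, x ∈ 𝔥 ↔
      (x.1 + x.1ᴴ = 0 ∧
        (∀ p : Fin (n + 1), p ≠ Fin.last n →
          x.1 p (Fin.last n) = 0 ∧ x.1 (Fin.last n) p = 0) ∧
        x.1 (Fin.last n) (Fin.last n) = x.2 • qi))
    (𝔪 : Submodule ℝ (SpU n))
    (h𝔪 : ∀ x : SpU n, x ∈ 𝔪 ↔ (x.1 + x.1ᴴ = 0 ∧ ∀ w ∈ 𝔥, ipSpU n x w = 0))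
    (𝔪₀ : Submodule ℝ (SpU n))
    (h𝔪₀ : ∀ x : SpU n, x ∈ 𝔪₀ ↔
      ((∀ p q : Fin (n + 1), ¬(p = Fin.last n ∧ q = Fin.last n) → x.1 p q = 0) ∧
        x.1 (Fin.last n) (Fin.last n) = (-x.2) • qi))
    (pr : SpU n →ₗ[ℝ] SpU n)
    (hpr : ∀ x : SpU n, x.1 + x.1ᴴ = 0 → pr x ∈ 𝔪 ∧ x - pr x ∈ 𝔥) :
    ∀ X : SpU n,
      (X ∈ 𝔪 ∧ X ≠ 0 ∧ IsRandersEquigeodesicVector 𝔥 𝔪 𝔪₀ pr X) ↔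
        (X ∈ 𝔪₀ ∧ X ≠ 0) := by
  intro X
  have h𝔪₀𝔪 : 𝔪₀ ≤ 𝔪 := fun u hu => by
    obtain ⟨t, rfl⟩ := SpU.isIn𝔪₀_iff.1 ((h𝔪₀ u).1 hu)
    exact SpU.corner_mem h𝔥 h𝔪 t
  constructor
  · rintro ⟨hX𝔪, hX0, hX⟩
    obtain ⟨hX_skew, hX_perp⟩ := (h𝔪 X).1 hX𝔪
    have h_pr (Z) (hZ : Z ∈ 𝔪) : ipSpU n (pr ⁅X, Z⁆) (SpU.corner n 1 (-1)) = 0 :=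
      hX.apply_pr_lie_eq_zero (SpU.isInvariantInnerOn_ipForm fun x hx => ((h𝔪 x).1 hx).1) hX𝔪 hX0
        ((h𝔪₀ _).2 (SpU.isIn𝔪₀_iff.2 ⟨1, rfl⟩)) hZ
    refine ⟨(h𝔪₀ X).2 (SpU.isIn𝔪₀_of_corner_lie_eq_zero hX_skew
      (fun w hw => hX_perp w ((h𝔥 w).2 hw)) ?_), hX0⟩
    exact SpU.corner_lie_eq_zero_of_forall_ipSpU_pr h𝔥 h𝔪 hpr hX𝔪 h_pr
  · rintro ⟨hX, hX0⟩
    refine ⟨h𝔪₀𝔪 hX, hX0, ?_⟩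
    obtain ⟨t, rfl⟩ := SpU.isIn𝔪₀_iff.1 ((h𝔪₀ _).1 hX)
    refine isRandersEquigeodesicVector_of_pr_lie_eq_lie hX h𝔪₀𝔪 ((h𝔥 _).2 (SpU.isIn𝔥_corner t))
      (fun u hu => ?_) (fun Z hZ => ?_)
    · obtain ⟨t', rfl⟩ := SpU.isIn𝔪₀_iff.1 ((h𝔪₀ u).1 hu)
      exact SpU.corner_lie_corner ..
    · rw [SpU.corner_lie_eq t (-t) t]
      exact SpU.pr_eq_self h𝔪 hpr (SpU.corner_lie_mem h𝔥 h𝔪 t t hZ)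

/-- **Randers equigeodesic vectors for the sphere `S^{4n+3} = Sp(n+1)U(1)/Sp(n)U(1)`.**
Here `𝔤 = sp(n+1) ⊕ ℝ` with the invariant inner product
`⟨(A,a),(B,b)⟩ = −Re(tr(A·B)) + a·b`,
`𝔥 = {(diag(C, a·i), a) : C ∈ sp(n), a ∈ ℝ}`, `𝔪 = 𝔥ᗮ` (inside `𝔤`) and
`𝔪₀ = {(diag(0_n, a·i), −a) : a ∈ ℝ}`.  The set of Randers equigeodesic vectors
contained in `𝔪` is exactly `𝔪₀ \ {0}`. -/
theorem randers_equigeodesic_vectors_of_sp_u_one_sphere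
    (n : ℕ) (hn : 1 ≤ n)
    (𝔥 : Submodule ℝ (SpU n))
    (h𝔥 : ∀ x : SpU n, x ∈ 𝔥 ↔
      (x.1 + x.1ᴴ = 0 ∧
        (∀ p : Fin (n + 1), p ≠ Fin.last n →
          x.1 p (Fin.last n) = 0 ∧ x.1 (Fin.last n) p = 0) ∧
        x.1 (Fin.last n) (Fin.last n) = x.2 • qi))
    (𝔪 : Submodule ℝ (SpU n))
    (h𝔪 : ∀ x : SpU n, x ∈ 𝔪 ↔ (x.1 + x.1ᴴ = 0 ∧ ∀ w ∈ 𝔥, ipSpU n x w = 0))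
    (𝔪₀ : Submodule ℝ (SpU n))
    (h𝔪₀ : ∀ x : SpU n, x ∈ 𝔪₀ ↔
      ((∀ p q : Fin (n + 1), ¬(p = Fin.last n ∧ q = Fin.last n) → x.1 p q = 0) ∧
        x.1 (Fin.last n) (Fin.last n) = (-x.2) • qi))
    (pr : SpU n →ₗ[ℝ] SpU n)
    (hpr : ∀ x : SpU n, x.1 + x.1ᴴ = 0 → pr x ∈ 𝔪 ∧ x - pr x ∈ 𝔥) :
    ∀ X : SpU n,
      (X ∈ 𝔪 ∧ X ≠ 0 ∧ IsRandersEquigeodesicVector 𝔥 𝔪 𝔪₀ pr X) ↔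
        (X ∈ 𝔪₀ ∧ X ≠ 0) :=
  randers_equigeodesic_vectors_of_sp_u_one_sphere_general n 𝔥 h𝔥 𝔪 h𝔪 𝔪₀ h𝔪₀ pr hpr
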